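/- arXiv:2103.10507 — 2 statements merged into one kernel-verified Lean document; each statement's English description precedes it below -/
import Mathlib

section
/- For every alignment γ of a log trace e : List E and a process run f : List F, the edit distance is a lower bound on the alignment cost: δ(e, f) ≤ κ(γ). -/
variable {E F : Type*}

/-- Edit distance (head recursion, applied to reversed lists to match the
snoc-based recursive definition). -/
noncomputable def editAux (PL : E → ℕ∞) (PM : F → ℕ∞) (Peq : E → F → ℕ∞) : List E → List F → ℕ∞
  | [], [] => 0
  | a :: e, [] => PL a + editAux PL PM Peq e []
  | [], b :: f => PM b + editAux PL PM Peq [] f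
  | a :: e, b :: f =>
      min (editAux PL PM Peq e f + Peq a b)
        (min (PL a + editAux PL PM Peq e (b :: f))
             (PM b + editAux PL PM Peq (a :: e) f))
termination_by e f => e.length + f.length

/-- The edit distance `δ`, satisfying
`δ [] [] = 0`, `δ (e ++ [a]) [] = PL a + δ e []`,
`δ [] (f ++ [b]) = PM b + δ [] f`, and
`δ (e ++ [a]) (f ++ [b]) =
  min (δ e f + Peq a b) (min (PL a + δ e (f ++ [b])) (PM b + δ (e ++ [a]) f))`. -/
noncomputable def editDist (PL : E → ℕ∞) (PM : F → ℕ∞) (Peq : E → F → ℕ∞)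
    (e : List E) (f : List F) : ℕ∞ :=
  editAux PL PM Peq e.reverse f.reverse

/-- Projection of a sequence of moves onto the log component. -/
def logProj (γ : List (Option E × Option F)) : List E := γ.filterMap Prod.fst

/-- Projection of a sequence of moves onto the model component. -/
def modelProj (γ : List (Option E × Option F)) : List F := γ.filterMap Prod.snd

/-- `γ` is an alignment of log trace `e` and process run `f`: it consists of
moves (no `(none, none)` pair), its log projection is `e` and its model
projection is `f`. -/
def IsAlignment (γ : List (Option E × Option F)) (e : List E) (f : List F) : Prop :=
  (∀ m ∈ γ, m ≠ ((none : Option E), (none : Option F))) ∧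
    logProj γ = e ∧ modelProj γ = f

/-- Cost of a single move. -/
def moveCost (PL : E → ℕ∞) (PM : F → ℕ∞) (Peq : E → F → ℕ∞) :
    Option E × Option F → ℕ∞
  | (some a, none) => PL a
  | (none, some b) => PM b
  | (some a, some b) => Peq a b
  | (none, none) => 0

/-- Cost `κ` of an alignment: the sum of the costs of its moves. -/
def alignCost (PL : E → ℕ∞) (PM : F → ℕ∞) (Peq : E → F → ℕ∞)
    (γ : List (Option E × Option F)) : ℕ∞ :=
  (γ.map (moveCost PL PM Peq)).sum

/-! Each move of an alignment pays for one branch of the recursion defining `δ`: a log,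
model or synchronous move strips the corresponding last symbol(s) from the traces, at exactly
the penalty charged by that branch. Induction along the alignment thus bounds `δ` move by move. -/

section

variable (PL : E → ℕ∞) (PM : F → ℕ∞) (Peq : E → F → ℕ∞)

theorem logProj_cons (m : Option E × Option F) (γ : List (Option E × Option F)) :
    logProj (m :: γ) = m.1.toList ++ logProj γ := by
  rcases m with ⟨_ | a, b⟩ <;> simp [logProj]

theorem modelProj_cons (m : Option E × Option F) (γ : List (Option E × Option F)) :
    modelProj (m :: γ) = m.2.toList ++ modelProj γ := by
  rcases m with ⟨a, _ | b⟩ <;> simp [modelProj]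

theorem logProj_reverse (γ : List (Option E × Option F)) :
    logProj γ.reverse = (logProj γ).reverse :=
  List.filterMap_reverse

theorem modelProj_reverse (γ : List (Option E × Option F)) :
    modelProj γ.reverse = (modelProj γ).reverse :=
  List.filterMap_reverse

theorem alignCost_cons (m : Option E × Option F) (γ : List (Option E × Option F)) :
    alignCost PL PM Peq (m :: γ) = moveCost PL PM Peq m + alignCost PL PM Peq γ :=
  List.sum_cons

theorem alignCost_reverse (γ : List (Option E × Option F)) :
    alignCost PL PM Peq γ.reverse = alignCost PL PM Peq γ := by
  simp [alignCost, List.map_reverse, List.sum_reverse]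

theorem editAux_move_le (m : Option E × Option F) (e : List E) (f : List F) :
    editAux PL PM Peq (m.1.toList ++ e) (m.2.toList ++ f)
      ≤ moveCost PL PM Peq m + editAux PL PM Peq e f := by
  rcases m with ⟨_ | a, _ | b⟩
  · simp [moveCost]
  · rw [Option.toList_none, Option.toList_some, List.nil_append, List.singleton_append]
    cases e with
    | nil => rw [editAux]; exact le_rfl
    | cons c e => rw [editAux]; exact (min_le_right _ _).trans (min_le_right _ _)
  · rw [Option.toList_some, Option.toList_none, List.nil_append, List.singleton_append]
    cases f with
    | nil => rw [editAux]; exact le_rfl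
    | cons d f => rw [editAux]; exact (min_le_right _ _).trans (min_le_left _ _)
  · rw [Option.toList_some, Option.toList_some, List.singleton_append, List.singleton_append,
      editAux, add_comm]
    exact min_le_left _ _

theorem editAux_logProj_modelProj_le (γ : List (Option E × Option F)) :
    editAux PL PM Peq (logProj γ) (modelProj γ) ≤ alignCost PL PM Peq γ := by
  induction γ with
  | nil => simp [logProj, modelProj, alignCost, editAux]
  | cons m γ ih =>
    rw [logProj_cons, modelProj_cons, alignCost_cons]
    exact (editAux_move_le PL PM Peq m _ _).trans (by gcongr)

end

theorem editDist_le_alignCost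
    (PL : E → ℕ∞) (PM : F → ℕ∞) (Peq : E → F → ℕ∞)
    (γ : List (Option E × Option F)) (e : List E) (f : List F)
    (h : IsAlignment γ e f) :
    editDist PL PM Peq e f ≤ alignCost PL PM Peq γ := by
  obtain ⟨-, rfl, rfl⟩ := h
  rw [editDist, ← logProj_reverse, ← modelProj_reverse, ← alignCost_reverse]
  exact editAux_logProj_modelProj_le PL PM Peq γ.reverse
end

section
/- Let A be a type with decidable equality and ℓ_E : E → A, ℓ_F : F → A be labeling functions. Instantiate the penalty functions by P_L a = 1, P_M b = 1, and P_eq a b = 0 if ℓ_E a = ℓ_F b and ⊤ otherwise. Then for all e : List E and f : List F, the edit distance δ(e, f) coincides with the classical Levenshtein distance (Mathlib's levenshtein) between the label lists e.map ℓ_E and f.map ℓ_F, computed with the cost structure whose deletion and insertion costs are constantly 1 and whose substitution cost of x, y is 0 if x = y and ⊤ otherwise (values in ℕ∞). -/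
variable {E F : Type*}

/-- Cost structure for the Levenshtein distance (as in Mathlib's former
`Mathlib/Data/List/EditDistance/Defs.lean`, removed since). -/
structure Levenshtein.Cost (α β δ : Type*) where
  delete : α → δ
  insert : β → δ
  substitute : α → β → δ

namespace Levenshtein

/-- Inner step of the Levenshtein computation (former Mathlib `Levenshtein.impl`). -/
def impl {α β δ : Type*} [AddZeroClass δ] [Min δ] (C : Cost α β δ)
    (xs : List α) (y : β) (d : {r : List δ // 0 < r.length}) : {r : List δ // 0 < r.length} :=
  let ⟨ds, w⟩ := d
  xs.zip (ds.zip ds.tail) |>.foldr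
    (init := ⟨[C.insert y + ds.getLast (List.ne_nil_of_length_pos w)], by simp⟩)
    (fun ⟨x, d₀, d₁⟩ ⟨r, w⟩ =>
      ⟨min (C.delete x + r[0]) (min (C.insert y + d₀) (C.substitute x y + d₁)) :: r, by simp⟩)

end Levenshtein

/-- Former Mathlib `suffixLevenshtein`. -/
def suffixLevenshtein {α β δ : Type*} [AddZeroClass δ] [Min δ] (C : Levenshtein.Cost α β δ)
    (xs : List α) (ys : List β) : {r : List δ // 0 < r.length} :=
  ys.foldr
    (Levenshtein.impl C xs)
    (xs.foldr (init := ⟨[0], by simp⟩) (fun a ⟨r, w⟩ => ⟨(C.delete a + r[0]) :: r, by simp⟩))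

/-- Former Mathlib `levenshtein`. -/
def levenshtein {α β δ : Type*} [AddZeroClass δ] [Min δ] (C : Levenshtein.Cost α β δ)
    (xs : List α) (ys : List β) : δ :=
  let ⟨r, w⟩ := suffixLevenshtein C xs ys
  r[0]

/-!
`editAux` unfolds exactly like the front-first recursion of `levenshtein`, so it computes the
Levenshtein distance of the label lists; `editDist` feeds it the reversed lists. It remains to see
that the Levenshtein distance is invariant under reversing both lists, i.e. that it also obeys the
back-first recursion. By induction, expanding a pair of nonempty lists first at the front and then
at the back produces the same minimum of sums as the opposite order, since `+` distributes over
`min` in a linearly ordered commutative monoid.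
-/

section Recursion

variable {α β δ : Type*} [AddZeroClass δ] [Min δ] (C : Levenshtein.Cost α β δ)

theorem Levenshtein.impl_cons (x : α) (xs : List α) (y : β) (d : δ)
    (A B : {r : List δ // 0 < r.length}) (hAB : A.1 = d :: B.1) :
    (impl C (x :: xs) y A).1 =
      min (C.delete x + (impl C xs y B).1[0]'(impl C xs y B).2)
        (min (C.insert y + d) (C.substitute x y + B.1[0]'B.2)) :: (impl C xs y B).1 := by
  obtain ⟨_, _⟩ := A
  obtain ⟨_ | ⟨d₁, ds⟩, hB⟩ := B
  · simp at hB
  · subst hAB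
    rfl

theorem Levenshtein.impl_nil (y : β) (d : δ) (A : {r : List δ // 0 < r.length})
    (hA : A.1 = [d]) :
    (impl C [] y A).1 = [C.insert y + d] := by
  obtain ⟨_, _⟩ := A
  subst hA
  rfl

theorem suffixLevenshtein_nil_left (ys : List β) :
    (suffixLevenshtein C [] ys).1 = [levenshtein C [] ys] := by
  cases ys <;> rfl

theorem suffixLevenshtein_cons_left (x : α) (xs : List α) (ys : List β) :
    (suffixLevenshtein C (x :: xs) ys).1 =
      levenshtein C (x :: xs) ys :: (suffixLevenshtein C xs ys).1 := by
  induction ys with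
  | nil => rfl
  | cons y ys ih =>
    have h := Levenshtein.impl_cons C x xs y _ _ _ ih
    exact h.trans (congrArg (· :: _) (List.getElem_of_eq h.symm (Nat.zero_lt_succ _)))

@[simp]
theorem levenshtein_nil_nil : levenshtein C ([] : List α) ([] : List β) = 0 := rfl

@[simp]
theorem levenshtein_cons_nil (x : α) (xs : List α) :
    levenshtein C (x :: xs) ([] : List β) = C.delete x + levenshtein C xs [] := rfl

@[simp]
theorem levenshtein_nil_cons (y : β) (ys : List β) :
    levenshtein C ([] : List α) (y :: ys) = C.insert y + levenshtein C [] ys :=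
  List.getElem_of_eq (Levenshtein.impl_nil C y _ _ (suffixLevenshtein_nil_left C ys)) _

@[simp]
theorem levenshtein_cons_cons (x : α) (xs : List α) (y : β) (ys : List β) :
    levenshtein C (x :: xs) (y :: ys) =
      min (C.delete x + levenshtein C xs (y :: ys))
        (min (C.insert y + levenshtein C (x :: xs) ys)
          (C.substitute x y + levenshtein C xs ys)) :=
  List.getElem_of_eq
    (Levenshtein.impl_cons C x xs y _ _ _ (suffixLevenshtein_cons_left C x xs ys)) _

end Recursion

section Reverse

variable {α β δ : Type*} [AddCommMonoid δ] (C : Levenshtein.Cost α β δ)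

theorem levenshtein_nil_append_singleton [Min δ] (ys : List β) (y : β) :
    levenshtein C ([] : List α) (ys ++ [y]) = C.insert y + levenshtein C [] ys := by
  induction ys with
  | nil => simp
  | cons z ys ih => simp [ih, add_left_comm]

theorem levenshtein_append_singleton_nil [Min δ] (xs : List α) (x : α) :
    levenshtein C (xs ++ [x]) ([] : List β) = C.delete x + levenshtein C xs [] := by
  induction xs with
  | nil => simp
  | cons w xs ih => simp [ih, add_left_comm]

theorem levenshtein_append_singleton_append_singleton [LinearOrder δ] [AddLeftMono δ] :
    ∀ (xs : List α) (x : α) (ys : List β) (y : β),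
      levenshtein C (xs ++ [x]) (ys ++ [y]) =
        min (C.delete x + levenshtein C xs (ys ++ [y]))
          (min (C.insert y + levenshtein C (xs ++ [x]) ys)
            (C.substitute x y + levenshtein C xs ys))
  | [], x, [], y => by simp
  | [], x, z :: ys, y => by
    have ih := levenshtein_append_singleton_append_singleton [] x ys y
    simp only [List.nil_append, List.cons_append] at ih ⊢
    simp only [levenshtein_cons_cons, levenshtein_nil_cons, levenshtein_nil_append_singleton, ih,
      ← min_add_add_left]
    ac_rfl
  | w :: xs, x, [], y => by
    have ih := levenshtein_append_singleton_append_singleton xs x [] y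
    simp only [List.nil_append, List.cons_append] at ih ⊢
    simp only [levenshtein_cons_cons, levenshtein_cons_nil, levenshtein_append_singleton_nil, ih,
      ← min_add_add_left]
    ac_rfl
  | w :: xs, x, z :: ys, y => by
    have ih₁ := levenshtein_append_singleton_append_singleton xs x (z :: ys) y
    have ih₂ := levenshtein_append_singleton_append_singleton (w :: xs) x ys y
    have ih₃ := levenshtein_append_singleton_append_singleton xs x ys y
    simp only [List.cons_append] at ih₁ ih₂ ⊢
    rw [levenshtein_cons_cons, ih₁, ih₂, ih₃, levenshtein_cons_cons C w xs z ys,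
      levenshtein_cons_cons C w xs z (ys ++ [y]), levenshtein_cons_cons C w (xs ++ [x]) z ys]
    simp only [← min_add_add_left]
    ac_rfl
termination_by xs _ ys => xs.length + ys.length

theorem levenshtein_reverse_reverse [LinearOrder δ] [AddLeftMono δ] :
    ∀ (xs : List α) (ys : List β), levenshtein C xs.reverse ys.reverse = levenshtein C xs ys
  | [], [] => rfl
  | [], y :: ys => by
    rw [List.reverse_nil, List.reverse_cons, levenshtein_nil_append_singleton, levenshtein_nil_cons]
    exact congrArg (C.insert y + ·) (levenshtein_reverse_reverse [] ys)
  | x :: xs, [] => by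
    rw [List.reverse_nil, List.reverse_cons, levenshtein_append_singleton_nil, levenshtein_cons_nil]
    exact congrArg (C.delete x + ·) (levenshtein_reverse_reverse xs [])
  | x :: xs, y :: ys => by
    rw [List.reverse_cons, List.reverse_cons, levenshtein_append_singleton_append_singleton,
      ← List.reverse_cons, ← List.reverse_cons, levenshtein_reverse_reverse xs (y :: ys),
      levenshtein_reverse_reverse (x :: xs) ys, levenshtein_reverse_reverse xs ys,
      levenshtein_cons_cons]
termination_by xs ys => xs.length + ys.length

end Reverse

theorem levenshtein_map_eq_editAux {α β : Type*} (C : Levenshtein.Cost α β ℕ∞)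
    (ℓE : E → α) (ℓF : F → β) :
    ∀ (u : List E) (v : List F),
      levenshtein C (u.map ℓE) (v.map ℓF) =
        editAux (C.delete ∘ ℓE) (C.insert ∘ ℓF)
          (fun a b => C.substitute (ℓE a) (ℓF b)) u v
  | [], [] => by rw [editAux]; rfl
  | a :: u, [] => by
    rw [editAux, ← levenshtein_map_eq_editAux C ℓE ℓF u [], List.map_cons, List.map_nil,
      levenshtein_cons_nil, Function.comp_apply]
  | [], b :: v => by
    rw [editAux, ← levenshtein_map_eq_editAux C ℓE ℓF [] v, List.map_cons, List.map_nil,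
      levenshtein_nil_cons, Function.comp_apply]
  | a :: u, b :: v => by
    rw [editAux, ← levenshtein_map_eq_editAux C ℓE ℓF u v,
      ← levenshtein_map_eq_editAux C ℓE ℓF u (b :: v),
      ← levenshtein_map_eq_editAux C ℓE ℓF (a :: u) v, List.map_cons, List.map_cons,
      levenshtein_cons_cons, Function.comp_apply, Function.comp_apply]
    ac_rfl
termination_by u v => u.length + v.length

theorem editDist_eq_levenshtein
    {A : Type*} [DecidableEq A] (ℓE : E → A) (ℓF : F → A)
    (e : List E) (f : List F) :
    editDist (fun _ => (1 : ℕ∞)) (fun _ => (1 : ℕ∞))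
        (fun a b => if ℓE a = ℓF b then (0 : ℕ∞) else ⊤) e f =
      levenshtein
        { delete := fun _ => (1 : ℕ∞),
          insert := fun _ => (1 : ℕ∞),
          substitute := fun x y => if x = y then (0 : ℕ∞) else ⊤ }
        (e.map ℓE) (f.map ℓF) := by
  rw [editDist, ← levenshtein_reverse_reverse, ← List.map_reverse, ← List.map_reverse,
    levenshtein_map_eq_editAux]
  rfl
end
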